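/- Every ordinal γ whose cofinality is at most ℵ₀ admits a good graph. -/

import Mathlib

noncomputable section

/-- A graph on an ordinal `γ` (i.e., a simple graph whose vertices are the ordinals
below `γ`) is *good* if it contains no cycles and, for every `α < γ`, its induced
subgraph on the tail `[α, γ)` is connected. -/
def GoodGraph (γ : Ordinal) (G : SimpleGraph ↥(Set.Iio γ)) : Prop :=
  G.IsAcyclic ∧
    ∀ α : ↥(Set.Iio γ), (G.induce {β : ↥(Set.Iio γ) | α.1 ≤ β.1}).Connected

/-!
Fix a monotone sequence `c₀ ≤ c₁ ≤ ⋯` cofinal in `γ` and join every `β` to the first `cₙ`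
strictly above it. Every vertex then has at most one neighbour above it, so a minimal vertex of
a cycle cannot exist. Inside a tail `[α, γ)`, each `β ≤ cₙ` reaches `cₙ`: either `β` is joined
to `cₙ` directly, or `β ≤ cₙ₋₁`, which reaches `cₙ₋₁`, which is joined to `cₙ`.
-/

open Set Cardinal

theorem Order.exists_seq_forall_le_of_cof_le_aleph0 {V : Type*} [Preorder V] [Nonempty V]
    (h : Order.cof V ≤ ℵ₀) : ∃ c : ℕ → V, ∀ x, ∃ n, x ≤ c n := by
  obtain ⟨s, hs, hcard⟩ := Order.exists_cof_eq V
  have hne : s.Nonempty := let ⟨y, hy, _⟩ := hs (Classical.arbitrary V); ⟨y, hy⟩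
  obtain ⟨c, rfl⟩ := (le_aleph0_iff_set_countable.1 (hcard ▸ h)).exists_eq_range hne
  refine ⟨c, fun x => ?_⟩
  obtain ⟨_, ⟨n, rfl⟩, hx⟩ := hs x
  exact ⟨n, hx⟩

namespace SimpleGraph

variable {V : Type*}

def parentGraph (p : V → V) : SimpleGraph V :=
  fromRel fun x y => y = p x

theorem parentGraph_induce_reachable_parent {p : V → V} {s : Set V} {x : V} (hx : x ∈ s)
    (hpx : p x ∈ s) :
    ((parentGraph p).induce s).Reachable ⟨x, hx⟩ ⟨p x, hpx⟩ := by
  by_cases h : x = p x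
  · simp only [← h]
    rfl
  · exact Adj.reachable (G := (parentGraph p).induce s) ⟨h, Or.inl rfl⟩

section PartialOrder

variable [PartialOrder V] {p : V → V}

theorem eq_or_lt_of_parentGraph_adj (hp : ∀ x, x ≤ p x) {x y : V}
    (h : (parentGraph p).Adj x y) : y = p x ∨ y < x := by
  obtain ⟨hne, rfl | rfl⟩ := h
  · exact Or.inl rfl
  · exact Or.inr ((hp y).lt_of_ne' hne)

theorem parentGraph_isAcyclic (hp : ∀ x, x ≤ p x) : (parentGraph p).IsAcyclic := by
  classical
  intro v c hc
  obtain ⟨μ, hμ⟩ := c.support.finite_toSet.exists_minimal ⟨v, c.start_mem_support⟩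
  let d := c.rotate μ hμ.prop
  have hd : d.IsCycle := hc.rotate hμ.prop
  have eq_parent : ∀ i, (parentGraph p).Adj μ (d.getVert i) → d.getVert i = p μ := fun i hadj =>
    (eq_or_lt_of_parentGraph_adj hp hadj).resolve_right fun hlt =>
      hμ.not_lt ((c.mem_support_rotate_iff μ hμ.prop).1 (d.getVert_mem_support i)) hlt
  exact hd.snd_ne_penultimate <| (eq_parent 1 (d.adj_snd hd.not_nil)).trans
    (eq_parent _ (d.adj_penultimate hd.not_nil).symm).symm

end PartialOrder

end SimpleGraph

open Classical in
def firstAbove {V : Type*} [Preorder V] (c : ℕ → V) (x : V) : V :=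
  if ∃ n, x < c n then c (sInf {n | x < c n}) else x

theorem le_firstAbove {V : Type*} [Preorder V] {c : ℕ → V} (x : V) : x ≤ firstAbove c x := by
  unfold firstAbove
  split_ifs with h
  · exact le_of_lt (Nat.sInf_mem (s := {n | x < c n}) h)
  · exact le_rfl

section LinearOrder

open SimpleGraph

variable {V : Type*} [LinearOrder V] {c : ℕ → V}

theorem firstAbove_eq_of_lt {x : V} {n : ℕ} (hlt : x < c n) (hle : ∀ k < n, c k ≤ x) :
    firstAbove c x = c n := by
  have hinf : sInf {k | x < c k} = n :=
    le_antisymm (Nat.sInf_le hlt) <|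
      le_csInf ⟨n, hlt⟩ fun k hk => not_lt.1 fun hkn => (hle k hkn).not_gt hk
  rw [firstAbove, if_pos ⟨n, hlt⟩, hinf]

theorem parentGraph_firstAbove_induce_Ici_reachable (hc : Monotone c) {a x : V} (n : ℕ)
    (hax : a ≤ x) (hxc : x ≤ c n) :
    ((parentGraph (firstAbove c)).induce (Ici a)).Reachable ⟨x, hax⟩ ⟨c n, hax.trans hxc⟩ := by
  have step : ∀ {x n} (hax : a ≤ x) (hxc : x ≤ c n), (∀ k < n, c k ≤ x) →
      ((parentGraph (firstAbove c)).induce (Ici a)).Reachable ⟨x, hax⟩ ⟨c n, hax.trans hxc⟩ := by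
    intro x n hax hxc hle
    rcases hxc.eq_or_lt with rfl | hlt
    · rfl
    · simpa only [firstAbove_eq_of_lt hlt hle] using
        parentGraph_induce_reachable_parent (p := firstAbove c) (s := Ici a) hax
          (hax.trans (le_firstAbove x))
  induction n generalizing x with
  | zero => exact step hax hxc (by simp)
  | succ n ih =>
    rcases le_or_gt x (c n) with hxn | hnx
    · exact (ih hax hxn).trans <|
        step _ (hc n.le_succ) fun k hk => hc (Nat.lt_succ_iff.1 hk)
    · exact step hax hxc fun k hk => (hc (Nat.lt_succ_iff.1 hk)).trans hnx.le

theorem parentGraph_firstAbove_induce_Ici_connected (hc : Monotone c)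
    (hcof : ∀ x, ∃ n, x ≤ c n) (a : V) :
    ((parentGraph (firstAbove c)).induce (Ici a)).Connected := by
  have : Nonempty (Ici a) := ⟨⟨a, le_rfl⟩⟩
  refine ⟨fun x y => ?_⟩
  obtain ⟨m, hm⟩ := hcof x
  obtain ⟨n, hn⟩ := hcof y
  have reach_max := fun (z : Ici a) (hz : z.1 ≤ c (max m n)) =>
    parentGraph_firstAbove_induce_Ici_reachable hc (max m n) z.2 hz
  exact (reach_max x (hm.trans (hc (le_max_left m n)))).trans
    (reach_max y (hn.trans (hc (le_max_right m n)))).symm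

theorem exists_isAcyclic_induce_Ici_connected (h : Order.cof V ≤ ℵ₀) :
    ∃ G : SimpleGraph V, G.IsAcyclic ∧ ∀ a, (G.induce (Ici a)).Connected := by
  rcases isEmpty_or_nonempty V with _ | _
  · exact ⟨⊥, .of_subsingleton, isEmptyElim⟩
  obtain ⟨c, hc⟩ := Order.exists_seq_forall_le_of_cof_le_aleph0 h
  exact ⟨parentGraph (firstAbove (partialSups c)), parentGraph_isAcyclic le_firstAbove,
    parentGraph_firstAbove_induce_Ici_connected (partialSups c).monotone
      fun x => (hc x).imp fun n hn => hn.trans (le_partialSups c n)⟩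

end LinearOrder

/-- Every ordinal of cofinality at most `ℵ₀` admits a good graph. -/
theorem stmt13 (γ : Ordinal) (h : γ.cof ≤ Cardinal.aleph0) :
    ∃ G : SimpleGraph ↥(Set.Iio γ), GoodGraph γ G := by
  have hcof : Order.cof (Iio γ) ≤ ℵ₀ := by
    rw [Ordinal.cof_Iio, ← Ordinal.lift_cof, lift_le_aleph0]
    exact h
  obtain ⟨G, hG, hconn⟩ := exists_isAcyclic_induce_Ici_connected hcof
  exact ⟨G, hG, hconn⟩
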